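/- arXiv:math/0405377 — 2 statements merged into one kernel-verified Lean document; each statement's English description precedes it below -/
import Mathlib

section
/- Let G = (v_0, v_1, v_2, ...) be an infinite geodesic in a first passage percolation configuration ω (i.e., for all m < n, τ(v_m, v_n) = Σ_{i=m}^{n-1} ω(v_i, v_{i+1})), where τ is the passage time. Then for any vertices x, y ∈ ℤ^d, the limit B_G(x,y) = lim_{n→∞} (τ(x, v_n) - τ(y, v_n)) exists (as a real number). -/
open Filter Topology MeasureTheory

/-- Vertices of `ℤ^d`. -/
abbrev V (d : ℕ) := Fin d → ℤ

/-- Nearest-neighbor adjacency in `ℤ^d`. -/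
def Adj {d : ℕ} (x y : V d) : Prop := (∑ i, |x i - y i|) = 1

/-- `p 0, p 1, …, p n` is a nearest-neighbor path. -/
def IsPathOn {d : ℕ} (p : ℕ → V d) (n : ℕ) : Prop := ∀ i < n, Adj (p i) (p (i + 1))

/-- Total weight of the path `p 0, …, p n` under the configuration `ω`. -/
noncomputable def pathWeight {d : ℕ} (ω : V d → V d → ℝ) (p : ℕ → V d) (n : ℕ) : ℝ :=
  ∑ i ∈ Finset.range n, ω (p i) (p (i + 1))

/-- Passage time: infimum over paths from `x` to `y` of the total weight. -/
noncomputable def tau {d : ℕ} (ω : V d → V d → ℝ) (x y : V d) : ℝ :=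
  sInf {w : ℝ | ∃ p n, p 0 = x ∧ p n = y ∧ IsPathOn p n ∧ pathWeight ω p n = w}

/-- An infinite geodesic: every finite subsegment realizes the passage time
between its endpoints. -/
def IsGeodesic {d : ℕ} (ω : V d → V d → ℝ) (v : ℕ → V d) : Prop :=
  ∀ m n, m < n → tau ω (v m) (v n) = ∑ i ∈ Finset.Ico m n, ω (v i) (v (i + 1))

/-- ℓ¹ norm on `ℤ^d`. -/
def l1 {d : ℕ} (x : V d) : ℤ := ∑ i, |x i|

/-- The vertex `(1,0,…,0)`. -/
def e1 (d : ℕ) : V d := fun i => if (i : ℕ) = 0 then 1 else 0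


/-- Existence of a nearest-neighbor path between any two vertices. -/
lemma exists_path_aux {d : ℕ} : ∀ (N : ℕ) (x y : V d), (∑ i, |x i - y i|) = N →
    ∃ p n, p 0 = x ∧ p n = y ∧ IsPathOn p n := by
  intro N
  induction N with
  | zero =>
    intro x y h
    have hxy : x = y := by
      funext i
      have h0 : |x i - y i| = 0 :=
        (Finset.sum_eq_zero_iff_of_nonneg (fun j _ => abs_nonneg _)).mp h i (Finset.mem_univ i)
      have := abs_eq_zero.mp h0
      linarith
    exact ⟨fun _ => x, 0, rfl, hxy ▸ rfl, fun i hi => absurd hi (by omega)⟩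
  | succ N ih =>
    intro x y h
    have hpos : 0 < ∑ i, |x i - y i| := by
      rw [h]; exact_mod_cast Nat.succ_pos N
    obtain ⟨i, hi⟩ : ∃ i, x i ≠ y i := by
      by_contra hc
      push_neg at hc
      have : ∀ i, x i - y i = 0 := fun i => by rw [hc i]; ring
      simp [this] at hpos
    set s : ℤ := if x i < y i then x i + 1 else x i - 1 with hs
    set x' : V d := Function.update x i s with hx'
    have hupd : ∀ j, x' j = if j = i then s else x j := fun j => by
      simp [hx', Function.update]
    have hadj : Adj x x' := by
      unfold Adj
      have : ∀ j, |x j - x' j| = if j = i then 1 else 0 := by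
        intro j
        rw [hupd j]
        by_cases hj : j = i
        · rw [hj, if_pos rfl]
          rcases lt_or_ge (x i) (y i) with hlt | hle
          · rw [hs, if_pos hlt]; simp
          · have : ¬ x i < y i := not_lt.mpr hle
            rw [hs, if_neg this]; simp
        · simp [hj]
      rw [Finset.sum_congr rfl (fun j _ => this j)]
      simp
    have hsum : (∑ j, |x' j - y j|) = N := by
      have hterm : ∀ j, |x' j - y j| = (if j = i then |x i - y i| - 1 else |x j - y j|) := by
        intro j
        rw [hupd j]
        by_cases hj : j = i
        · rw [hj, if_pos rfl]
          rcases lt_or_ge (x i) (y i) with hlt | hle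
          · rw [hs, if_pos hlt]
            rw [abs_of_nonpos (by omega), abs_of_nonpos (by omega)]
            omega
          · have hgt : y i < x i := lt_of_le_of_ne hle (fun he => hi he.symm)
            have : ¬ x i < y i := not_lt.mpr hle
            rw [hs, if_neg this]
            rw [abs_of_nonneg (by omega), abs_of_nonneg (by omega)]
            omega
        · simp [hj]
      have hsplit := Finset.sum_erase_add Finset.univ (fun j => |x j - y j|) (Finset.mem_univ i)
      have hsplit' := Finset.sum_erase_add Finset.univ (fun j => |x' j - y j|) (Finset.mem_univ i)
      have heq : ∑ j ∈ Finset.univ.erase i, |x' j - y j|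
          = ∑ j ∈ Finset.univ.erase i, |x j - y j| := by
        refine Finset.sum_congr rfl fun j hj => ?_
        rw [hterm j, if_neg (Finset.mem_erase.mp hj).1]
      have hi' : |x' i - y i| = |x i - y i| - 1 := by rw [hterm i, if_pos rfl]
      have hN : (∑ j, |x j - y j|) = (N : ℤ) + 1 := by rw [h]; push_cast; ring
      linarith
    obtain ⟨p, n, hp0, hpn, hpath⟩ := ih x' y hsum
    refine ⟨fun k => if k = 0 then x else p (k - 1), n + 1, by simp, by simp [hpn], ?_⟩
    intro j hj
    by_cases hj0 : j = 0
    · subst hj0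
      simpa [hp0] using hadj
    · have h1 : j - 1 < n := by omega
      have h2 : j - 1 + 1 = j := by omega
      simpa [hj0, h2] using hpath (j - 1) h1

lemma pathWeight_nonneg {d : ℕ} (ω : V d → V d → ℝ) (hnn : ∀ x y, 0 ≤ ω x y)
    (p : ℕ → V d) (n : ℕ) : 0 ≤ pathWeight ω p n :=
  Finset.sum_nonneg fun _ _ => hnn _ _

def tauSet {d : ℕ} (ω : V d → V d → ℝ) (x y : V d) : Set ℝ :=
  {w : ℝ | ∃ p n, p 0 = x ∧ p n = y ∧ IsPathOn p n ∧ pathWeight ω p n = w}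

lemma tau_eq_sInf {d : ℕ} (ω : V d → V d → ℝ) (x y : V d) :
    tau ω x y = sInf (tauSet ω x y) := rfl

lemma tauSet_nonempty {d : ℕ} (ω : V d → V d → ℝ) (x y : V d) :
    (tauSet ω x y).Nonempty := by
  obtain ⟨p, n, h0, h1, h2⟩ :=
    exists_path_aux (∑ i, |x i - y i|).toNat x y
      (by
        rw [Int.toNat_of_nonneg (Finset.sum_nonneg fun j _ => abs_nonneg _)])
  exact ⟨pathWeight ω p n, p, n, h0, h1, h2, rfl⟩

lemma tauSet_bddBelow {d : ℕ} (ω : V d → V d → ℝ) (hnn : ∀ x y, 0 ≤ ω x y) (x y : V d) :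
    BddBelow (tauSet ω x y) := by
  refine ⟨0, fun w hw => ?_⟩
  obtain ⟨p, n, _, _, _, hpw⟩ := hw
  exact hpw ▸ pathWeight_nonneg ω hnn p n

/-- Triangle inequality for passage times. -/
lemma tau_triangle {d : ℕ} (ω : V d → V d → ℝ) (hnn : ∀ x y, 0 ≤ ω x y) (x y z : V d) :
    tau ω x z ≤ tau ω x y + tau ω y z := by
  have key : ∀ a ∈ tauSet ω x y, ∀ b ∈ tauSet ω y z, tau ω x z ≤ a + b := by
    rintro a ⟨p, m, hp0, hpm, hp, hpw⟩ b ⟨q, n, hq0, hqn, hq, hqw⟩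
    set r : ℕ → V d := fun k => if k < m then p k else q (k - m) with hr
    have hjoin : p m = q 0 := by rw [hpm, hq0]
    have hrval : ∀ i ≤ m, r i = p i := by
      intro i him
      rcases lt_or_eq_of_le him with h | h
      · simp [hr, h]
      · subst h; simp [hr, hjoin]
    have hr0 : r 0 = x := by rw [hrval 0 (Nat.zero_le m), hp0]
    have hrend : r (m + n) = z := by
      have h1 : ¬ m + n < m := by omega
      simp only [hr, if_neg h1, Nat.add_sub_cancel_left, hqn]
    have hrpath : IsPathOn r (m + n) := by
      intro i hi
      by_cases him : i < m
      · rw [hrval i (by omega), hrval (i+1) (by omega)]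
        exact hp i him
      · have h1 : ¬ i < m := him
        have h2 : ¬ i + 1 < m := by omega
        have h3 : i + 1 - m = (i - m) + 1 := by omega
        simp only [hr, if_neg h1, if_neg h2, h3]
        exact hq (i - m) (by omega)
    have hrw : pathWeight ω r (m + n) = a + b := by
      have hA : ∑ i ∈ Finset.range m, ω (r i) (r (i + 1)) = a := by
        rw [← hpw]
        refine Finset.sum_congr rfl fun i hi => ?_
        have him : i < m := Finset.mem_range.mp hi
        rw [hrval i (by omega), hrval (i + 1) (by omega)]
      have hB : ∑ i ∈ Finset.Ico m (m + n), ω (r i) (r (i + 1)) = b := by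
        rw [← hqw, Finset.sum_Ico_eq_sum_range]
        simp only [Nat.add_sub_cancel_left]
        refine Finset.sum_congr rfl fun i hi => ?_
        have hin : i < n := Finset.mem_range.mp hi
        have h1 : ¬ m + i < m := by omega
        have h2 : ¬ m + i + 1 < m := by omega
        have h3 : m + i - m = i := by omega
        have h4 : m + i + 1 - m = i + 1 := by omega
        simp only [hr, if_neg h1, if_neg h2, h3, h4]
      unfold pathWeight
      rw [Finset.range_eq_Ico,
        ← Finset.sum_Ico_consecutive _ (Nat.zero_le m) (Nat.le_add_right m n),
        ← Finset.range_eq_Ico, hA, hB]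
    exact csInf_le (tauSet_bddBelow ω hnn x z) ⟨r, m + n, hr0, hrend, hrpath, hrw⟩
  rw [tau_eq_sInf ω x y, tau_eq_sInf ω y z]
  rw [← sub_le_iff_le_add]
  apply le_csInf (tauSet_nonempty ω x y)
  intro a ha
  rw [sub_le_iff_le_add, add_comm, ← sub_le_iff_le_add]
  apply le_csInf (tauSet_nonempty ω y z)
  intro b hb
  rw [sub_le_iff_le_add, add_comm]
  exact key a ha b hb

/-- Busemann-type limits along an infinite geodesic exist. -/
theorem busemann_limit_exists {d : ℕ} (ω : V d → V d → ℝ)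
    (hnn : ∀ x y, 0 ≤ ω x y) (hsym : ∀ x y, ω x y = ω y x)
    (v : ℕ → V d) (hG : IsGeodesic ω v) (x y : V d) :
    ∃ L : ℝ, Tendsto (fun n => tau ω x (v n) - tau ω y (v n)) atTop (𝓝 L) := by
  have hsplit : ∀ m n : ℕ, m < n →
      tau ω (v 0) (v (n + 1)) = tau ω (v 0) (v (m + 1)) + tau ω (v (m + 1)) (v (n + 1)) := by
    intro m n hmn
    rw [hG 0 (n + 1) (by omega), hG 0 (m + 1) (by omega), hG (m + 1) (n + 1) (by omega)]
    exact (Finset.sum_Ico_consecutive _ (by omega) (by omega)).symm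
  have key : ∀ z : V d,
      ∃ L, Tendsto (fun n => tau ω z (v (n + 1)) - tau ω (v 0) (v (n + 1))) atTop (𝓝 L) := by
    intro z
    set a : ℕ → ℝ := fun n => tau ω z (v (n + 1)) - tau ω (v 0) (v (n + 1)) with ha
    have hanti : Antitone a := by
      intro m n hmn
      rcases eq_or_lt_of_le hmn with h | h
      · subst h; exact le_refl _
      · have h1 := hsplit m n h
        have h2 := tau_triangle ω hnn z (v (m + 1)) (v (n + 1))
        simp only [ha]
        linarith
    have hbdd : BddBelow (Set.range a) := by
      refine ⟨-(tau ω (v 0) z), ?_⟩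
      rintro w ⟨n, rfl⟩
      have h2 := tau_triangle ω hnn (v 0) z (v (n + 1))
      simp only [ha]
      linarith
    exact ⟨_, tendsto_atTop_ciInf hanti hbdd⟩
  obtain ⟨Lx, hx⟩ := key x
  obtain ⟨Ly, hy⟩ := key y
  refine ⟨Lx - Ly, ?_⟩
  rw [← tendsto_add_atTop_iff_nat 1]
  have h := hx.sub hy
  have heq : (fun n => (tau ω x (v (n + 1)) - tau ω (v 0) (v (n + 1))) -
      (tau ω y (v (n + 1)) - tau ω (v 0) (v (n + 1))))
      = fun n => tau ω x (v (n + 1)) - tau ω y (v (n + 1)) := by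
    funext n; ring
  rwa [heq] at h
end

section
/- Suppose for a configuration ω there exist two infinite geodesics G_0 (from vertex x) and G_1 (from vertex y) with B_{G_0}(x,y) < 0 < B_{G_1}(x,y). Then coexistence holds for the competing growth model started from (x, y): infinitely many vertices z satisfy τ(x,z) < τ(y,z) and infinitely many vertices z satisfy τ(y,z) < τ(x,z). -/
open Filter Topology MeasureTheory

theorem Set.infinite_setOf_of_eventually_injective {α : Type*} {u : ℕ → α}
    (hu : Function.Injective u) {p : α → Prop} (h : ∀ᶠ n in atTop, p (u n)) :
    {z | p z}.Infinite := by
  obtain ⟨N, hN⟩ := eventually_atTop.mp h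
  refine ((Set.Ici_infinite N).image hu.injOn).mono ?_
  rintro _ ⟨n, hn, rfl⟩
  exact hN n hn

theorem infinite_setOf_lt_of_tendsto_sub_neg {α : Type*} {f g : α → ℝ} {u : ℕ → α}
    (hu : Function.Injective u) {b : ℝ}
    (h : Tendsto (fun n => f (u n) - g (u n)) atTop (𝓝 b)) (hb : b < 0) :
    {z | f z < g z}.Infinite :=
  Set.infinite_setOf_of_eventually_injective hu <|
    (h.eventually_lt_const hb).mono fun _ => sub_neg.mp

theorem coexistence_from_straddling_geodesics_general {d : ℕ} (ω : V d → V d → ℝ)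
    (x y : V d) (v w : ℕ → V d)
    (hinj0 : Function.Injective v) (hinj1 : Function.Injective w)
    (b0 b1 : ℝ)
    (hB0 : Tendsto (fun n => tau ω x (v n) - tau ω y (v n)) atTop (𝓝 b0))
    (hB1 : Tendsto (fun n => tau ω x (w n) - tau ω y (w n)) atTop (𝓝 b1))
    (hb0 : b0 < 0) (hb1 : 0 < b1) :
    {z : V d | tau ω x z < tau ω y z}.Infinite ∧
    {z : V d | tau ω y z < tau ω x z}.Infinite := by
  refine ⟨infinite_setOf_lt_of_tendsto_sub_neg hinj0 hB0 hb0, ?_⟩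
  have hB1_swap : Tendsto (fun n => tau ω y (w n) - tau ω x (w n)) atTop (𝓝 (-b1)) := by
    simpa only [neg_sub] using hB1.neg
  exact infinite_setOf_lt_of_tendsto_sub_neg hinj1 hB1_swap (neg_neg_of_pos hb1)

/-- two infinite geodesics whose Busemann values straddle 0 force
coexistence: infinitely many vertices are closer to x and infinitely many are closer
to y. -/
theorem coexistence_from_straddling_geodesics {d : ℕ} (ω : V d → V d → ℝ)
    (hnn : ∀ x y, 0 ≤ ω x y) (hsym : ∀ x y, ω x y = ω y x)
    (x y : V d) (v w : ℕ → V d) (hv0 : v 0 = x) (hw0 : w 0 = y)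
    (hG0 : IsGeodesic ω v) (hG1 : IsGeodesic ω w)
    (hinj0 : Function.Injective v) (hinj1 : Function.Injective w)
    (b0 b1 : ℝ)
    (hB0 : Tendsto (fun n => tau ω x (v n) - tau ω y (v n)) atTop (𝓝 b0))
    (hB1 : Tendsto (fun n => tau ω x (w n) - tau ω y (w n)) atTop (𝓝 b1))
    (hb0 : b0 < 0) (hb1 : 0 < b1) :
    {z : V d | tau ω x z < tau ω y z}.Infinite ∧
    {z : V d | tau ω y z < tau ω x z}.Infinite :=
  coexistence_from_straddling_geodesics_general ω x y v w hinj0 hinj1 b0 b1 hB0 hB1 hb0 hb1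
end
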